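/- Suppose θ₁, θ₂ ∈ [0,2], μ₁, μ₂ ∈ ℝ, σ₁, σ₂ > 0, and K_{θ₁,μ₁,σ₁}(t) = K_{θ₂,μ₂,σ₂}(t) for all t in some interval (a, ∞), where K_{θ,μ,σ}(t) = exp(−(Λ_θ(t)−μ)²/(2σ²))·Λ'_θ(t) and Λ_θ is the Yeo–Johnson transformation. Then (θ₁, μ₁, σ₁) = (θ₂, μ₂, σ₂). -/

import Mathlib

/-!
On `t ≥ 0` the transformation is the Box–Cox transform `B_θ(y) = (y^θ - 1)/θ` of `y = t + 1`,
so `log K_{θ,μ,σ} = -(B_θ(y) - μ)²/(2σ²) + (θ - 1) log y`. For `θ > 0` this log-density is of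
exact order `-y^{2θ}/(2σ²θ²)`, while for smaller exponents it is `o(y^{2θ})`; hence equal
log-densities have equal `θ`. Once the `θ` agree, the log terms cancel and equality becomes a
quadratic identity in `B_θ(y) → ∞`, which forces its coefficients, hence `σ` and `μ`, to agree.
-/

/-- The Yeo–Johnson transformation. -/
noncomputable def YJ (θ t : ℝ) : ℝ :=
  if 0 ≤ t then
    if θ = 0 then Real.log (t + 1) else ((t + 1) ^ θ - 1) / θ
  else
    if θ = 2 then -Real.log (-t + 1) else -(((-t + 1) ^ (2 - θ) - 1) / (2 - θ))


/-- The derivative of the Yeo–Johnson transformation. -/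
noncomputable def YJderiv (θ t : ℝ) : ℝ :=
  if 0 ≤ t then (t + 1) ^ (θ - 1) else (1 - t) ^ (1 - θ)

/-- The function `K_{θ,μ,σ}` from Assumption (A7). -/
noncomputable def Kfun (θ μ σ t : ℝ) : ℝ :=
  Real.exp (-(YJ θ t - μ) ^ 2 / (2 * σ ^ 2)) * YJderiv θ t

open Filter Topology Real

noncomputable def boxCox (θ y : ℝ) : ℝ := if θ = 0 then log y else (y ^ θ - 1) / θ

lemma YJ_of_nonneg (θ : ℝ) {t : ℝ} (ht : 0 ≤ t) : YJ θ t = boxCox θ (t + 1) := by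
  simp [YJ, boxCox, ht]

lemma YJderiv_of_nonneg (θ : ℝ) {t : ℝ} (ht : 0 ≤ t) : YJderiv θ t = (t + 1) ^ (θ - 1) := by
  simp [YJderiv, ht]

section BoxCox

variable {θ θ' : ℝ}

lemma boxCox_div_rpow (hθ' : θ' ≠ 0) {y : ℝ} (hy : 0 < y) :
    boxCox θ' y / y ^ θ = (y ^ (θ' - θ) - y ^ (-θ)) / θ' := by
  rw [boxCox, if_neg hθ', rpow_sub hy, rpow_neg hy.le]
  field_simp

lemma tendsto_boxCox_div_rpow (hθ : 0 < θ) :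
    Tendsto (fun y => boxCox θ y / y ^ θ) atTop (𝓝 θ⁻¹) := by
  have h := ((tendsto_const_nhds (x := (1 : ℝ))).sub (tendsto_rpow_neg_atTop hθ)).div_const θ
  rw [sub_zero, one_div] at h
  refine h.congr' ?_
  filter_upwards [eventually_gt_atTop 0] with y hy
  rw [boxCox_div_rpow hθ.ne' hy, sub_self, rpow_zero]

lemma tendsto_boxCox_div_rpow_of_lt (hθ : 0 < θ) (hlt : θ' < θ) :
    Tendsto (fun y => boxCox θ' y / y ^ θ) atTop (𝓝 0) := by
  rcases eq_or_ne θ' 0 with rfl | hθ'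
  · simpa [boxCox] using (isLittleO_log_rpow_atTop hθ).tendsto_div_nhds_zero
  have h := ((tendsto_rpow_neg_atTop (sub_pos.2 hlt)).sub (tendsto_rpow_neg_atTop hθ)).div_const θ'
  rw [sub_zero, zero_div] at h
  refine h.congr' ?_
  filter_upwards [eventually_gt_atTop 0] with y hy
  rw [boxCox_div_rpow hθ' hy, neg_sub]

lemma tendsto_boxCox_atTop (hθ : 0 ≤ θ) : Tendsto (boxCox θ) atTop atTop := by
  rcases hθ.eq_or_lt with rfl | hθ
  · exact tendsto_log_atTop.congr fun y => by simp [boxCox]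
  refine ((tendsto_atTop_add_const_right atTop (-1) (tendsto_rpow_atTop hθ)).atTop_div_const
    hθ).congr fun y => ?_
  simp [boxCox, hθ.ne', sub_eq_add_neg]

end BoxCox

/-- `log K_{θ,μ,σ}(t)` written in the variable `y = t + 1`, for `t ≥ 0`. -/
noncomputable def logK (θ μ σ y : ℝ) : ℝ := -(boxCox θ y - μ) ^ 2 / (2 * σ ^ 2) + (θ - 1) * log y

lemma log_Kfun (θ μ σ : ℝ) {t : ℝ} (ht : 0 ≤ t) : log (Kfun θ μ σ t) = logK θ μ σ (t + 1) := by
  have hy : 0 < t + 1 := by linarith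
  rw [Kfun, YJ_of_nonneg θ ht, YJderiv_of_nonneg θ ht, log_mul (exp_ne_zero _)
    (rpow_pos_of_pos hy _).ne', log_exp, log_rpow hy, logK]

lemma tendsto_logK_div_sq_rpow {θ θ' μ σ c : ℝ} (hθ : 0 < θ)
    (hB : Tendsto (fun y => boxCox θ' y / y ^ θ) atTop (𝓝 c)) :
    Tendsto (fun y => logK θ' μ σ y / (y ^ θ) ^ 2) atTop (𝓝 (-c ^ 2 / (2 * σ ^ 2))) := by
  have hμ : Tendsto (fun y => μ / y ^ θ) atTop (𝓝 0) :=
    tendsto_const_nhds.div_atTop (tendsto_rpow_atTop hθ)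
  have hlog : Tendsto (fun y => log y / (y ^ θ) ^ 2) atTop (𝓝 0) := by
    refine (isLittleO_log_rpow_atTop (add_pos hθ hθ)).tendsto_div_nhds_zero.congr' ?_
    filter_upwards [eventually_gt_atTop 0] with y hy
    rw [rpow_add hy, sq]
  have h := ((((hB.sub hμ).pow 2).neg.div_const (2 * σ ^ 2)).add (hlog.const_mul (θ' - 1)))
  rw [sub_zero, mul_zero, add_zero] at h
  refine h.congr fun y => ?_
  rw [logK]
  ring

lemma le_of_logK_eventuallyEq {θ₁ θ₂ μ₁ μ₂ σ₁ σ₂ : ℝ} (hθ₂ : 0 ≤ θ₂) (hσ₁ : σ₁ ≠ 0)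
    (h : logK θ₁ μ₁ σ₁ =ᶠ[atTop] logK θ₂ μ₂ σ₂) : θ₁ ≤ θ₂ := by
  by_contra! hlt
  have hθ₁ : 0 < θ₁ := hθ₂.trans_lt hlt
  have h₁ := tendsto_logK_div_sq_rpow (μ := μ₁) (σ := σ₁) hθ₁ (tendsto_boxCox_div_rpow hθ₁)
  have h₂ := tendsto_logK_div_sq_rpow (μ := μ₂) (σ := σ₂) hθ₁
    (tendsto_boxCox_div_rpow_of_lt hθ₁ hlt)
  have hlim := tendsto_nhds_unique h₁ (h₂.congr' <| by filter_upwards [h] with y hy; rw [hy])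
  simp [hσ₁, hθ₁.ne'] at hlim

lemma eq_zero_of_frequently_quadratic_eq_zero {a b c : ℝ}
    (h : ∃ᶠ x in atTop, a * x ^ 2 + b * x + c = 0) : a = 0 ∧ b = 0 ∧ c = 0 := by
  open Polynomial in
  have hp : C a * X ^ 2 + C b * X + C c = 0 := by
    refine eq_zero_of_infinite_isRoot _ (Set.infinite_of_not_bddAbove ?_)
    rw [not_bddAbove_iff]
    intro x
    obtain ⟨y, hxy, hy⟩ := frequently_atTop'.1 h x
    exact ⟨y, by simpa using hy, hxy⟩
  refine ⟨?_, ?_, ?_⟩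
  · simpa using congrArg (Polynomial.coeff · 2) hp
  · simpa using congrArg (Polynomial.coeff · 1) hp
  · simpa using congrArg (Polynomial.coeff · 0) hp

lemma eq_of_frequently_sq_sub_div_eq {μ₁ μ₂ s₁ s₂ : ℝ} (hs₁ : s₁ ≠ 0) (hs₂ : s₂ ≠ 0)
    (h : ∃ᶠ x in atTop, (x - μ₁) ^ 2 / s₁ = (x - μ₂) ^ 2 / s₂) : μ₁ = μ₂ ∧ s₁ = s₂ := by
  obtain ⟨ha, hb, -⟩ := eq_zero_of_frequently_quadratic_eq_zero
    (a := s₂ - s₁) (b := -2 * (s₂ * μ₁ - s₁ * μ₂)) (c := s₂ * μ₁ ^ 2 - s₁ * μ₂ ^ 2) <| by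
      refine h.mono fun x hx => ?_
      field_simp at hx
      linear_combination hx
  have hs : s₁ = s₂ := by linarith
  subst hs
  refine ⟨?_, rfl⟩
  have : s₁ * (μ₂ - μ₁) = 0 := by linear_combination hb / 2
  exact (sub_eq_zero.1 ((mul_eq_zero.1 this).resolve_left hs₁)).symm

lemma eq_of_logK_eventuallyEq {θ μ₁ μ₂ σ₁ σ₂ : ℝ} (hθ : 0 ≤ θ) (hσ₁ : 0 < σ₁) (hσ₂ : 0 < σ₂)
    (h : logK θ μ₁ σ₁ =ᶠ[atTop] logK θ μ₂ σ₂) : μ₁ = μ₂ ∧ σ₁ = σ₂ := by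
  have hsq : ∃ᶠ x in atTop, (x - μ₁) ^ 2 / (2 * σ₁ ^ 2) = (x - μ₂) ^ 2 / (2 * σ₂ ^ 2) :=
    (tendsto_boxCox_atTop hθ).frequently <| h.frequently.mono fun y hy => by
      rw [logK, logK, add_left_inj, neg_div, neg_div, neg_inj] at hy
      exact hy
  obtain ⟨hμ, hσ⟩ := eq_of_frequently_sq_sub_div_eq (by positivity) (by positivity) hsq
  exact ⟨hμ, (sq_eq_sq₀ hσ₁.le hσ₂.le).1 (by linarith)⟩

/-- Identifiability: if two `K`-densities agree on a half-line `(a, ∞)`, their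
parameters coincide. -/
theorem Kfun_identifiable (θ₁ θ₂ μ₁ μ₂ σ₁ σ₂ a : ℝ)
    (hθ₁ : θ₁ ∈ Set.Icc (0 : ℝ) 2) (hθ₂ : θ₂ ∈ Set.Icc (0 : ℝ) 2)
    (hσ₁ : 0 < σ₁) (hσ₂ : 0 < σ₂)
    (heq : ∀ t : ℝ, a < t → Kfun θ₁ μ₁ σ₁ t = Kfun θ₂ μ₂ σ₂ t) :
    θ₁ = θ₂ ∧ μ₁ = μ₂ ∧ σ₁ = σ₂ := by
  have hlog : logK θ₁ μ₁ σ₁ =ᶠ[atTop] logK θ₂ μ₂ σ₂ := by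
    filter_upwards [eventually_gt_atTop (max a 0 + 1)] with y hy
    have ht : 0 ≤ y - 1 := by linarith [le_max_right a 0]
    have hat : a < y - 1 := by linarith [le_max_left a 0]
    rw [← sub_add_cancel y 1, ← log_Kfun _ _ _ ht, ← log_Kfun _ _ _ ht, heq _ hat]
  have hθ : θ₁ = θ₂ := le_antisymm (le_of_logK_eventuallyEq hθ₂.1 hσ₁.ne' hlog)
    (le_of_logK_eventuallyEq hθ₁.1 hσ₂.ne' hlog.symm)
  subst hθ
  exact ⟨rfl, eq_of_logK_eventuallyEq hθ₁.1 hσ₁ hσ₂ hlog⟩
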